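/- Fix p ∈ ℝ. For every integer k ≥ 0 there exists a constant C ≥ 0 such that for every integer n ≥ 1, ∫ |Real.sqrt n · Real.log x|^k d(GIG(p; n, n))(x) ≤ C; that is, all moments of √n · log x under GIG(p; n, n) remain bounded uniformly in n. -/
import Mathlib

open MeasureTheory Real Set
open scoped ENNReal

lemma cosh_bound' (t : ℝ) : 2 + t^2 ≤ Real.exp t + Real.exp (-t) := by
  have key : ∀ u : ℝ, 0 ≤ u → 2 + u^2 ≤ Real.exp u + Real.exp (-u) := by
    intro u hu
    have hs : u/2 ≤ Real.sinh (u/2) := by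
      rcases eq_or_lt_of_le hu with h|h
      · simp [← h]
      · exact (Real.self_lt_sinh_iff.mpr (by linarith)).le
    rw [Real.sinh_eq] at hs
    have hab : u ≤ Real.exp (u/2) - Real.exp (-(u/2)) := by linarith
    have h1 : Real.exp (u/2) * Real.exp (-(u/2)) = 1 := by
      rw [← Real.exp_add]; simp
    have h2 : Real.exp (u/2) * Real.exp (u/2) = Real.exp u := by
      rw [← Real.exp_add]; ring_nf
    have h3 : Real.exp (-(u/2)) * Real.exp (-(u/2)) = Real.exp (-u) := by
      rw [← Real.exp_add]; ring_nf
    nlinarith [mul_self_le_mul_self hu hab]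
  rcases le_total 0 t with h|h
  · exact key t h
  · have h2 := key (-t) (by linarith)
    rw [neg_neg] at h2
    nlinarith [h2]

lemma lintegral_image_1d {s : Set ℝ} {f f' : ℝ → ℝ} (hs : MeasurableSet s)
    (hf' : ∀ x ∈ s, HasDerivWithinAt f (f' x) s x) (hf : Set.InjOn f s) (g : ℝ → ℝ≥0∞) :
    ∫⁻ x in f '' s, g x = ∫⁻ x in s, ENNReal.ofReal |f' x| * g (f x) := by
  simpa only [ContinuousLinearMap.det_toSpanSingleton] using
    MeasureTheory.lintegral_image_eq_lintegral_abs_det_fderiv_mul volume hs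
      (fun x hx => (hf' x hx).hasFDerivWithinAt) hf g

/-- Unnormalized density of the generalized inverse Gaussian distribution `GIG(p; a, b)`. -/
noncomputable def gigDensity (p a b : ℝ) (x : ℝ) : ENNReal :=
  if 0 < x then ENNReal.ofReal (x ^ (p - 1) * Real.exp (-(a * x + b / x) / 2)) else 0

lemma gigDensity_measurable (p a b : ℝ) : Measurable (gigDensity p a b) := by
  have heq : gigDensity p a b = fun x =>
      if 0 < x then ENNReal.ofReal (Real.exp (Real.log x * (p - 1)) *
        Real.exp (-(a * x + b / x) / 2)) else 0 := by
    funext x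
    unfold gigDensity
    by_cases hx : 0 < x
    · simp only [hx, if_true, Real.rpow_def_of_pos hx]
    · simp [hx]
  rw [heq]
  refine Measurable.ite measurableSet_Ioi ?_ measurable_const
  refine Measurable.ennreal_ofReal ?_
  exact ((Real.measurable_log.mul_const _).exp).mul
    ((((measurable_const.mul measurable_id').add
      (measurable_const.div measurable_id')).neg.div_const 2).exp)

lemma pointwise_bound {p r x : ℝ} (hr : 1 ≤ r) (hx : 0 < x) :
    x ^ (p-1) * Real.exp (-(r*x + r/x)/2) ≤
      Real.exp (p^2 - r) * (Real.exp (-(1/4) * (r * (Real.log x)^2)) * x⁻¹) := by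
  set t := Real.log x with ht
  have hx' : x = Real.exp t := (Real.exp_log hx).symm
  have h1 : x ^ (p-1) = Real.exp ((p-1) * t) := by
    rw [Real.rpow_def_of_pos hx, mul_comm]
  have hinv : x⁻¹ = Real.exp (-t) := by rw [hx', ← Real.exp_neg]
  have hcosh : 2 + t^2 ≤ Real.exp t + Real.exp (-t) := cosh_bound' t
  have hdiv : r / x = r * Real.exp (-t) := by
    rw [hx', Real.exp_neg, div_eq_mul_inv]
  calc x ^ (p-1) * Real.exp (-(r*x + r/x)/2)
      = Real.exp ((p-1)*t + -(r * Real.exp t + r * Real.exp (-t))/2) := by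
        rw [h1, hdiv, ← Real.exp_add, hx']
    _ ≤ Real.exp ((p-1)*t + -(r * (2 + t^2))/2) := by
        apply Real.exp_le_exp.mpr
        have : r * (2 + t^2) ≤ r * Real.exp t + r * Real.exp (-t) := by
          nlinarith [mul_le_mul_of_nonneg_left hcosh (by linarith : (0:ℝ) ≤ r)]
        linarith
    _ ≤ Real.exp ((p^2 - r) + (-(1/4) * (r * t^2) + -t)) := by
        apply Real.exp_le_exp.mpr
        nlinarith [sq_nonneg (p - t/2), mul_nonneg (sub_nonneg.mpr hr) (sq_nonneg t)]
    _ = Real.exp (p^2 - r) * (Real.exp (-(1/4) * (r * t^2)) * x⁻¹) := by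
        rw [hinv, ← Real.exp_add, ← Real.exp_add]

/-- The (scalar) generalized inverse Gaussian distribution `GIG(p; a, b)`. -/
noncomputable def GIG (p a b : ℝ) : Measure ℝ :=
  ((volume.withDensity (gigDensity p a b)) Set.univ)⁻¹ • volume.withDensity (gigDensity p a b)

/-- All moments of `√n · log x` under `GIG(p; n, n)` are bounded uniformly in `n`. -/
theorem stmt_17 (p : ℝ) :
    ∀ k : ℕ, ∃ C : ℝ, 0 ≤ C ∧ ∀ n : ℕ, 1 ≤ n →
      ∫⁻ x, ENNReal.ofReal (|Real.sqrt n * Real.log x| ^ k) ∂(GIG p n n) ≤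
        ENNReal.ofReal C := by
  intro k
  have hMint : Integrable (fun u : ℝ => |u| ^ k * Real.exp (-(1/4) * u ^ 2)) := by
    have h1 : Integrable (fun u : ℝ => u ^ (k:ℝ) * Real.exp (-(1/4) * u ^ 2)) :=
      integrable_rpow_mul_exp_neg_mul_sq (by norm_num)
        (lt_of_lt_of_le neg_one_lt_zero (Nat.cast_nonneg k))
    refine h1.abs.congr (Filter.Eventually.of_forall fun u => ?_)
    simp [abs_mul, abs_of_pos (Real.exp_pos _), Real.rpow_natCast, abs_pow]
  set M : ℝ := ∫ u : ℝ, |u| ^ k * Real.exp (-(1/4) * u ^ 2) with hMdef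
  have hM0 : 0 ≤ M := integral_nonneg fun u => by positivity
  set c : ℝ := min 1 ((2:ℝ) ^ (p - 1)) with hcdef
  have hc0 : 0 < c := lt_min one_pos (Real.rpow_pos_of_pos two_pos _)
  refine ⟨c⁻¹ * Real.exp (p ^ 2 + 1/2) * M, by positivity, ?_⟩
  intro n hn
  set r : ℝ := (n : ℝ) with hrdef
  have hr : 1 ≤ r := by rw [hrdef]; exact_mod_cast hn
  have hr0 : 0 < r := by linarith
  have hsr : 0 < Real.sqrt r := Real.sqrt_pos.mpr hr0
  have hsr1 : 1 ≤ Real.sqrt r := by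
    rw [show (1:ℝ) = Real.sqrt 1 by simp]
    exact Real.sqrt_le_sqrt hr
  have hwmeas : Measurable fun x : ℝ => ENNReal.ofReal (|Real.sqrt r * Real.log x| ^ k) :=
    ((measurable_const.mul Real.measurable_log).abs.pow_const k).ennreal_ofReal
  -- the auxiliary comparison density
  set φ : ℝ → ℝ≥0∞ := fun x => if 0 < x then ENNReal.ofReal (|Real.sqrt r * Real.log x| ^ k *
      (Real.exp (-(1/4) * (r * (Real.log x) ^ 2)) * x⁻¹)) else 0 with hφ
  -- pointwise bound
  have hpt : ∀ x, (gigDensity p r r * fun x => ENNReal.ofReal (|Real.sqrt r * Real.log x| ^ k)) x ≤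
      ENNReal.ofReal (Real.exp (p ^ 2 - r)) * φ x := by
    intro x
    by_cases hx : 0 < x
    · simp only [Pi.mul_apply, gigDensity, hφ, hx, if_true]
      rw [← ENNReal.ofReal_mul (by positivity), ← ENNReal.ofReal_mul (Real.exp_pos _).le]
      apply ENNReal.ofReal_le_ofReal
      have hb := pointwise_bound (p := p) hr hx
      have hw : (0:ℝ) ≤ |Real.sqrt r * Real.log x| ^ k := by positivity
      nlinarith [mul_le_mul_of_nonneg_right hb hw]
    · simp [Pi.mul_apply, gigDensity, hφ, hx]
  have hN : ∫⁻ x, (gigDensity p r r * fun x => ENNReal.ofReal (|Real.sqrt r * Real.log x| ^ k)) x ≤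
      ENNReal.ofReal (Real.exp (p ^ 2 - r)) * ∫⁻ x, φ x := by
    rw [← lintegral_const_mul' _ _ ENNReal.ofReal_ne_top]
    exact lintegral_mono hpt
  -- compute the auxiliary integral by two changes of variables
  have hI : ∫⁻ x, φ x = (ENNReal.ofReal (Real.sqrt r))⁻¹ * ENNReal.ofReal M := by
    have h1 : ∫⁻ x, φ x = ∫⁻ x in Ioi (0:ℝ), ENNReal.ofReal (|Real.sqrt r * Real.log x| ^ k *
        (Real.exp (-(1/4) * (r * (Real.log x) ^ 2)) * x⁻¹)) := by
      rw [← lintegral_indicator measurableSet_Ioi]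
      congr 1
    have hexp : ∀ x : ℝ, x ∈ (univ : Set ℝ) →
        HasDerivWithinAt Real.exp (Real.exp x) univ x :=
      fun x _ => (Real.hasDerivAt_exp x).hasDerivWithinAt
    have h2 := lintegral_image_1d MeasurableSet.univ hexp Real.exp_injective.injOn
      (fun x => ENNReal.ofReal (|Real.sqrt r * Real.log x| ^ k *
        (Real.exp (-(1/4) * (r * (Real.log x) ^ 2)) * x⁻¹)))
    rw [Set.image_univ, Real.range_exp, Measure.restrict_univ] at h2
    have h3 : ∀ t : ℝ, ENNReal.ofReal |Real.exp t| *
        ENNReal.ofReal (|Real.sqrt r * Real.log (Real.exp t)| ^ k *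
          (Real.exp (-(1/4) * (r * (Real.log (Real.exp t)) ^ 2)) * (Real.exp t)⁻¹)) =
        ENNReal.ofReal (|Real.sqrt r * t| ^ k * Real.exp (-(1/4) * (r * t ^ 2))) := by
      intro t
      rw [Real.log_exp, abs_of_pos (Real.exp_pos t), ← ENNReal.ofReal_mul (Real.exp_pos t).le]
      congr 1
      field_simp
    rw [h1, h2]
    simp_rw [h3]
    -- scaling substitution
    have hlin : ∀ t : ℝ, t ∈ (univ : Set ℝ) →
        HasDerivWithinAt (fun t : ℝ => Real.sqrt r * t) (Real.sqrt r) univ t := by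
      intro t _
      have h := (hasDerivAt_id t).const_mul (Real.sqrt r)
      rw [mul_one] at h
      exact h.hasDerivWithinAt
    have hinj : Set.InjOn (fun t : ℝ => Real.sqrt r * t) univ :=
      fun a _ b _ h => mul_left_cancel₀ hsr.ne' h
    have h4 := lintegral_image_1d MeasurableSet.univ hlin hinj
      (fun u => ENNReal.ofReal (|u| ^ k * Real.exp (-(1/4) * u ^ 2)))
    have himg : (fun t : ℝ => Real.sqrt r * t) '' univ = univ := by
      apply Set.eq_univ_of_forall
      intro y
      exact ⟨y / Real.sqrt r, Set.mem_univ _, by field_simp⟩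
    rw [himg, Measure.restrict_univ] at h4
    have h5 : ∀ t : ℝ, ENNReal.ofReal |Real.sqrt r| *
        ENNReal.ofReal (|Real.sqrt r * t| ^ k * Real.exp (-(1/4) * (Real.sqrt r * t) ^ 2)) =
        ENNReal.ofReal (Real.sqrt r) *
          ENNReal.ofReal (|Real.sqrt r * t| ^ k * Real.exp (-(1/4) * (r * t ^ 2))) := by
      intro t
      rw [abs_of_pos hsr, mul_pow, Real.sq_sqrt hr0.le]
    simp_rw [h5] at h4
    rw [lintegral_const_mul' _ _ ENNReal.ofReal_ne_top] at h4
    have hG : ∫⁻ u : ℝ, ENNReal.ofReal (|u| ^ k * Real.exp (-(1/4) * u ^ 2)) =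
        ENNReal.ofReal M :=
      (ofReal_integral_eq_lintegral_ofReal hMint
        (Filter.Eventually.of_forall fun u => by positivity)).symm
    rw [hG] at h4
    rw [h4, ← mul_assoc, ENNReal.inv_mul_cancel, one_mul]
    · exact (ENNReal.ofReal_pos.mpr hsr).ne'
    · exact ENNReal.ofReal_ne_top
  -- lower bound on the normalization constant
  have hZ : ENNReal.ofReal (c * Real.exp (-(r + 1/2)) * (Real.sqrt r)⁻¹) ≤
      (volume.withDensity (gigDensity p r r)) Set.univ := by
    rw [withDensity_apply _ MeasurableSet.univ, Measure.restrict_univ]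
    have hi1 : (Real.sqrt r)⁻¹ ≤ 1 := by
      rw [inv_le_one_iff₀]
      right; exact hsr1
    have hsub : ∫⁻ x in Icc 1 (1 + (Real.sqrt r)⁻¹), ENNReal.ofReal (c * Real.exp (-(r + 1/2))) ≤
        ∫⁻ x in Icc 1 (1 + (Real.sqrt r)⁻¹), gigDensity p r r x := by
      apply setLIntegral_mono (gigDensity_measurable p r r)
      intro x hx
      obtain ⟨hx1, hx2⟩ := hx
      have hx0 : (0:ℝ) < x := by linarith
      have hx2' : x ≤ 2 := by linarith
      unfold gigDensity
      rw [if_pos hx0]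
      apply ENNReal.ofReal_le_ofReal
      have hbase : c ≤ x ^ (p - 1) := by
        rcases le_or_gt 0 (p - 1) with h | h
        · exact le_trans (min_le_left _ _) (Real.one_le_rpow hx1 h)
        · exact le_trans (min_le_right _ _) (Real.rpow_le_rpow_of_nonpos hx0 hx2' h.le)
      have hexp2 : Real.exp (-(r + 1/2)) ≤ Real.exp (-(r * x + r / x) / 2) := by
        apply Real.exp_le_exp.mpr
        have hfrac : 1/x ≤ 1 - (x - 1) + (x - 1)^2 := by
          rw [div_le_iff₀ hx0]; nlinarith
        have hsq : (x - 1)^2 ≤ r⁻¹ := by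
          have h1 : x - 1 ≤ (Real.sqrt r)⁻¹ := by linarith
          have h2 : ((Real.sqrt r)⁻¹)^2 = r⁻¹ := by
            rw [sq, ← mul_inv, Real.mul_self_sqrt hr0.le]
          have h3 : (x - 1)^2 ≤ ((Real.sqrt r)⁻¹)^2 :=
            pow_le_pow_left₀ (by linarith) h1 2
          linarith
        have hxd : r / x = r * (1/x) := by ring
        have hge : r * r⁻¹ = 1 := mul_inv_cancel₀ hr0.ne'
        nlinarith [mul_le_mul_of_nonneg_left hfrac hr0.le, mul_le_mul_of_nonneg_left hsq hr0.le]
      calc c * Real.exp (-(r + 1/2)) ≤ x ^ (p-1) * Real.exp (-(r * x + r / x) / 2) :=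
            mul_le_mul hbase hexp2 (Real.exp_pos _).le (Real.rpow_nonneg hx0.le _)
        _ = x ^ (p-1) * Real.exp (-(r * x + r / x) / 2) := rfl
    calc ENNReal.ofReal (c * Real.exp (-(r + 1/2)) * (Real.sqrt r)⁻¹)
        = ENNReal.ofReal (c * Real.exp (-(r + 1/2))) * ENNReal.ofReal ((Real.sqrt r)⁻¹) := by
          rw [ENNReal.ofReal_mul (by positivity)]
      _ = ∫⁻ _ in Icc 1 (1 + (Real.sqrt r)⁻¹), ENNReal.ofReal (c * Real.exp (-(r + 1/2))) := by
          rw [setLIntegral_const, Real.volume_Icc]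
          congr 2
          ring
      _ ≤ ∫⁻ x in Icc 1 (1 + (Real.sqrt r)⁻¹), gigDensity p r r x := hsub
      _ ≤ ∫⁻ x, gigDensity p r r x := setLIntegral_le_lintegral _ _
  -- assemble
  set z : ℝ := c * Real.exp (-(r + 1/2)) * (Real.sqrt r)⁻¹ with hzdef
  have hz0 : 0 < z := by positivity
  rw [GIG, lintegral_smul_measure,
    lintegral_withDensity_eq_lintegral_mul volume (gigDensity_measurable p r r) hwmeas]
  have step1 : ((volume.withDensity (gigDensity p r r)) Set.univ)⁻¹ *
      ∫⁻ x, (gigDensity p r r * fun x => ENNReal.ofReal (|Real.sqrt r * Real.log x| ^ k)) x ≤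
      (ENNReal.ofReal z)⁻¹ * (ENNReal.ofReal (Real.exp (p ^ 2 - r)) *
        ((ENNReal.ofReal (Real.sqrt r))⁻¹ * ENNReal.ofReal M)) := by
    apply mul_le_mul' (ENNReal.inv_le_inv' hZ)
    calc ∫⁻ x, (gigDensity p r r * fun x => ENNReal.ofReal (|Real.sqrt r * Real.log x| ^ k)) x
        ≤ ENNReal.ofReal (Real.exp (p ^ 2 - r)) * ∫⁻ x, φ x := hN
      _ = ENNReal.ofReal (Real.exp (p ^ 2 - r)) *
          ((ENNReal.ofReal (Real.sqrt r))⁻¹ * ENNReal.ofReal M) := by rw [hI]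
  refine le_trans step1 ?_
  have hA : ENNReal.ofReal (Real.exp (p ^ 2 - r)) *
      ((ENNReal.ofReal (Real.sqrt r))⁻¹ * ENNReal.ofReal M) =
      ENNReal.ofReal (Real.exp (p ^ 2 - r) * ((Real.sqrt r)⁻¹ * M)) := by
    rw [← ENNReal.ofReal_inv_of_pos hsr, ← ENNReal.ofReal_mul (by positivity),
      ← ENNReal.ofReal_mul (Real.exp_pos _).le]
  have hkey : Real.exp (p ^ 2 - r) * ((Real.sqrt r)⁻¹ * M) =
      (c⁻¹ * Real.exp (p ^ 2 + 1/2) * M) * z := by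
    rw [hzdef, show Real.exp (p ^ 2 - r) = Real.exp (p ^ 2 + 1/2) * Real.exp (-(r + 1/2)) from
      by rw [← Real.exp_add]; ring_nf]
    field_simp
  calc (ENNReal.ofReal z)⁻¹ * (ENNReal.ofReal (Real.exp (p ^ 2 - r)) *
        ((ENNReal.ofReal (Real.sqrt r))⁻¹ * ENNReal.ofReal M))
      = (ENNReal.ofReal z)⁻¹ *
        ENNReal.ofReal ((c⁻¹ * Real.exp (p ^ 2 + 1/2) * M) * z) := by rw [hA, hkey]
    _ = (ENNReal.ofReal z)⁻¹ *
        (ENNReal.ofReal (c⁻¹ * Real.exp (p ^ 2 + 1/2) * M) * ENNReal.ofReal z) := by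
        rw [ENNReal.ofReal_mul (p := c⁻¹ * Real.exp (p ^ 2 + 1/2) * M) (by positivity)]
    _ = ENNReal.ofReal (c⁻¹ * Real.exp (p ^ 2 + 1/2) * M) *
        (ENNReal.ofReal z * (ENNReal.ofReal z)⁻¹) := by ring
    _ = ENNReal.ofReal (c⁻¹ * Real.exp (p ^ 2 + 1/2) * M) := by
        rw [ENNReal.mul_inv_cancel (ENNReal.ofReal_pos.mpr hz0).ne' ENNReal.ofReal_ne_top,
          mul_one]
    _ ≤ ENNReal.ofReal (c⁻¹ * Real.exp (p ^ 2 + 1/2) * M) := le_rfl
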